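/- Let N be a quantum channel with Choi matrix Γ^N_{AB} = (id_A ⊗ N)(|Γ⟩⟨Γ|_{AA'}), where |Γ⟩ = Σ_i |i⟩|i⟩. For any density operators ρ_A and σ_B with appropriate supports and any α ∈ (1,∞), D̃_α(ρ_A^{1/2} Γ^N_{AB} ρ_A^{1/2} ‖ ρ_A ⊗ σ_B) = (α/(α-1)) log ‖ (Γ^N_{AB})^{1/2} (ρ_A^{1/α} ⊗ σ_B^{(1-α)/α}) (Γ^N_{AB})^{1/2} ‖_α. -/

import Mathlib

open scoped Kronecker
open Matrix
open scoped ComplexOrder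

/-- Matrix power `A^r` for real `r`, via the spectral decomposition of a Hermitian matrix
(with the convention `0 ^ r = 0` on the kernel, i.e. functional calculus on the support);
junk value `0` if `A` is not Hermitian. -/
noncomputable def mpow {m : Type*} [Fintype m] [DecidableEq m] (A : Matrix m m ℂ) (r : ℝ) :
    Matrix m m ℂ :=
  if hA : A.IsHermitian then
    (hA.eigenvectorUnitary : Matrix m m ℂ) *
      Matrix.diagonal (fun i => ((hA.eigenvalues i ^ r : ℝ) : ℂ)) *
      (star (hA.eigenvectorUnitary : Matrix m m ℂ))
  else 0

/-- Matrix logarithm (base 2) of a Hermitian matrix, via functional calculus on the support. -/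
noncomputable def mlog2 {m : Type*} [Fintype m] [DecidableEq m] (A : Matrix m m ℂ) :
    Matrix m m ℂ :=
  if hA : A.IsHermitian then
    (hA.eigenvectorUnitary : Matrix m m ℂ) *
      Matrix.diagonal (fun i => ((Real.logb 2 (hA.eigenvalues i) : ℝ) : ℂ)) *
      (star (hA.eigenvectorUnitary : Matrix m m ℂ))
  else 0

/-- Schatten `α`-norm `‖X‖_α = (Tr[(X†X)^(α/2)])^(1/α)`. -/
noncomputable def schattenNorm {m : Type*} [Fintype m] [DecidableEq m] (α : ℝ)
    (X : Matrix m m ℂ) : ℝ :=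
  ((mpow (Xᴴ * X) (α / 2)).trace.re) ^ (1 / α)

/-- A density operator: positive semidefinite with unit trace. -/
def IsDensity {m : Type*} [Fintype m] (ρ : Matrix m m ℂ) : Prop :=
  ρ.PosSemidef ∧ ρ.trace = 1

/-- Support inclusion `supp ρ ⊆ supp σ`, expressed via inclusion of kernels. -/
def SuppLE {m : Type*} [Fintype m] (ρ σ : Matrix m m ℂ) : Prop :=
  ∀ v : m → ℂ, σ.mulVec v = 0 → ρ.mulVec v = 0

/-- The sandwiched Rényi relative entropy
`D̃_α(ρ‖σ) = (1/(α-1)) log₂ Tr{(σ^((1-α)/(2α)) ρ σ^((1-α)/(2α)))^α}`. -/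
noncomputable def sRenyi {m : Type*} [Fintype m] [DecidableEq m] (α : ℝ)
    (ρ σ : Matrix m m ℂ) : ℝ :=
  (α - 1)⁻¹ * Real.logb 2
    ((mpow (mpow σ ((1 - α) / (2 * α)) * ρ * mpow σ ((1 - α) / (2 * α))) α).trace.re)

/-- The traditional quantum Rényi relative entropy
`D_α(ρ‖σ) = (1/(α-1)) log₂ Tr{ρ^α σ^(1-α)}`. -/
noncomputable def tRenyi {m : Type*} [Fintype m] [DecidableEq m] (α : ℝ)
    (ρ σ : Matrix m m ℂ) : ℝ :=
  (α - 1)⁻¹ * Real.logb 2 ((mpow ρ α * mpow σ (1 - α)).trace.re)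

/-- Partial trace over the first (A) factor. -/
noncomputable def ptraceA {a b : Type*} [Fintype a] (M : Matrix (a × b) (a × b) ℂ) :
    Matrix b b ℂ :=
  Matrix.of fun i j => ∑ k, M (k, i) (k, j)

/-- Partial trace over the second (B) factor. -/
noncomputable def ptraceB {a b : Type*} [Fintype b] (M : Matrix (a × b) (a × b) ℂ) :
    Matrix a a ℂ :=
  Matrix.of fun i j => ∑ k, M (i, k) (j, k)

/-- The Choi matrix `Γ^N_{AB} = (id_A ⊗ N)(|Γ⟩⟨Γ|)` of a linear map on matrices,
where `|Γ⟩ = Σ_i |i⟩|i⟩`. -/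
noncomputable def choi {a b : Type*} [Fintype a] [DecidableEq a]
    (N : Matrix a a ℂ →ₗ[ℂ] Matrix b b ℂ) : Matrix (a × b) (a × b) ℂ :=
  Matrix.of fun p q => N (Matrix.single p.1 q.1 1) p.2 q.2

/-- A quantum channel: completely positive (positive semidefinite Choi matrix) and
trace preserving. -/
def IsCPTP {a b : Type*} [Fintype a] [DecidableEq a] [Fintype b]
    (N : Matrix a a ℂ →ₗ[ℂ] Matrix b b ℂ) : Prop :=
  (choi N).PosSemidef ∧ ∀ X : Matrix a a ℂ, (N X).trace = X.trace

/-!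
Put `G = (Γ^N)^{1/2}` and `K = ρ^{1/(2α)} ⊗ σ^{(1-α)/(2α)}`. As `(ρ ⊗ σ)^c = ρ^c ⊗ σ^c` commutes
with `ρ^{1/2} ⊗ 1`, the operator raised to the power `α` in `D̃_α` is `K G G K = Bᴴ B` with
`B = G K`, while the operator inside the Schatten norm is `G K K G = B Bᴴ`. Now `Bᴴ B` and `B Bᴴ`
have the same characteristic polynomial, hence the same eigenvalues, so
`Tr (Bᴴ B)^α = Tr (B Bᴴ)^α = ‖B Bᴴ‖_α^α`, and taking logarithms gives the identity.
-/

open Polynomial Unitary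

namespace Matrix

lemma isSelfAdjoint_diagonal_ofReal {n : Type*} [DecidableEq n] (d : n → ℝ) :
    IsSelfAdjoint (diagonal (RCLike.ofReal ∘ d) : Matrix n n ℂ) :=
  isHermitian_diagonal_iff.mpr fun i => Complex.conj_ofReal (d i)

section

variable {n : Type*} [Fintype n] [DecidableEq n]

lemma aeval_diagonal {R α : Type*} [CommSemiring R] [CommSemiring α] [Algebra R α]
    (p : R[X]) (v : n → α) : aeval (diagonal v) p = diagonal fun i => aeval (v i) p := by
  rw [← diagonalAlgHom_apply R, aeval_algHom_apply, aeval_pi_apply, diagonalAlgHom_apply]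

lemma spectrum_real_diagonal_ofReal (d : n → ℝ) :
    spectrum ℝ (diagonal (RCLike.ofReal ∘ d) : Matrix n n ℂ) = Set.range d := by
  rw [← spectrum.preimage_algebraMap ℂ, spectrum_diagonal, Set.range_comp]
  exact Set.preimage_image_eq _ RCLike.ofReal_injective

lemma cfc_diagonal_ofReal (f : ℝ → ℝ) (d : n → ℝ) :
    cfc f (diagonal (RCLike.ofReal ∘ d) : Matrix n n ℂ) = diagonal (RCLike.ofReal ∘ f ∘ d) := by
  -- on the finite spectrum `f` agrees with its Lagrange interpolant
  obtain ⟨p, hp⟩ : ∃ p : ℝ[X], ∀ i, p.eval (d i) = f (d i) :=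
    ⟨Lagrange.interpolate (Finset.univ.image d) id f, fun i => Lagrange.eval_interpolate_at_node f
      (Set.injOn_id _) (Finset.mem_image_of_mem d (Finset.mem_univ i))⟩
  have hfp : (spectrum ℝ (diagonal (RCLike.ofReal ∘ d) : Matrix n n ℂ)).EqOn f p.eval := by
    rw [spectrum_real_diagonal_ofReal]
    rintro - ⟨i, rfl⟩
    exact (hp i).symm
  rw [cfc_congr hfp, cfc_polynomial _ _ (isSelfAdjoint_diagonal_ofReal d), aeval_diagonal]
  congr 1
  ext i
  simpa [hp] using aeval_algebraMap_apply ℂ (d i) p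

lemma cfc_conjStarAlgAut_diagonal (U : unitary (Matrix n n ℂ)) (f : ℝ → ℝ) (d : n → ℝ) :
    cfc f (conjStarAlgAut ℂ _ U (diagonal (RCLike.ofReal ∘ d))) =
      conjStarAlgAut ℂ _ U (diagonal (RCLike.ofReal ∘ f ∘ d)) := by
  rw [← cfc_diagonal_ofReal, StarAlgHomClass.map_cfc (conjStarAlgAut ℂ _ U) f _
    (finite_real_spectrum.continuousOn _)
    (show Continuous fun X : Matrix n n ℂ => (U : Matrix n n ℂ) * X * (star U : Matrix n n ℂ) by
      fun_prop) (isSelfAdjoint_diagonal_ofReal d)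
    ((isSelfAdjoint_diagonal_ofReal d).map (conjStarAlgAut ℂ _ U))]

lemma IsHermitian.trace_cfc {A : Matrix n n ℂ} (hA : A.IsHermitian) (f : ℝ → ℝ) :
    (cfc f A).trace = ∑ i, (f (hA.eigenvalues i) : ℂ) := by
  rw [hA.cfc_eq, IsHermitian.cfc, conjStarAlgAut_apply, trace_mul_cycle,
    Unitary.coe_star_mul_self, one_mul, trace_diagonal]
  rfl

lemma trace_cfc_conjTranspose_mul_self (B : Matrix n n ℂ) (f : ℝ → ℝ) :
    (cfc f (Bᴴ * B)).trace = (cfc f (B * Bᴴ)).trace := by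
  have h₁ := isHermitian_conjTranspose_mul_self B
  have h₂ := isHermitian_mul_conjTranspose_self B
  rw [h₁.trace_cfc, h₂.trace_cfc, (h₁.eigenvalues_eq_eigenvalues_iff h₂).2 (charpoly_mul_comm _ _)]

end

lemma IsHermitian.kronecker {n m : Type*} {A : Matrix n n ℂ} {B : Matrix m m ℂ}
    (hA : A.IsHermitian) (hB : B.IsHermitian) : (A ⊗ₖ B).IsHermitian := by
  rw [IsHermitian, conjTranspose_kronecker, hA.eq, hB.eq]

lemma diagonal_ofReal_kronecker {n m : Type*} [DecidableEq n] [DecidableEq m] (d : n → ℝ)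
    (e : m → ℝ) :
    (diagonal (RCLike.ofReal ∘ d) : Matrix n n ℂ) ⊗ₖ diagonal (RCLike.ofReal ∘ e) =
      diagonal (RCLike.ofReal ∘ fun p : n × m => d p.1 * e p.2) := by
  rw [diagonal_kronecker_diagonal]
  congr 1
  ext p
  simp

section

variable {n m : Type*} [Fintype n] [DecidableEq n] [Fintype m] [DecidableEq m]

def kroneckerUnitary (U : unitary (Matrix n n ℂ)) (V : unitary (Matrix m m ℂ)) :
    unitary (Matrix (n × m) (n × m) ℂ) :=
  ⟨(U : Matrix n n ℂ) ⊗ₖ (V : Matrix m m ℂ), kronecker_mem_unitary U.2 V.2⟩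

lemma conjStarAlgAut_kronecker (U : unitary (Matrix n n ℂ)) (V : unitary (Matrix m m ℂ))
    (X : Matrix n n ℂ) (Y : Matrix m m ℂ) :
    conjStarAlgAut ℂ _ U X ⊗ₖ conjStarAlgAut ℂ _ V Y =
      conjStarAlgAut ℂ (Matrix (n × m) (n × m) ℂ) (kroneckerUnitary U V) (X ⊗ₖ Y) := by
  rw [conjStarAlgAut_apply, conjStarAlgAut_apply, conjStarAlgAut_apply, mul_kronecker_mul,
    mul_kronecker_mul]
  congr 1
  exact (conjTranspose_kronecker _ _).symm

lemma cfc_kronecker {P : Matrix n n ℂ} {Q : Matrix m m ℂ} (hP : P.IsHermitian)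
    (hQ : Q.IsHermitian) {f : ℝ → ℝ}
    (hf : ∀ x ∈ spectrum ℝ P, ∀ y ∈ spectrum ℝ Q, f (x * y) = f x * f y) :
    cfc f (P ⊗ₖ Q) = cfc f P ⊗ₖ cfc f Q := by
  rw [hP.cfc_eq, hQ.cfc_eq, IsHermitian.cfc, IsHermitian.cfc, conjStarAlgAut_kronecker,
    diagonal_ofReal_kronecker]
  conv_lhs => rw [hP.spectral_theorem, hQ.spectral_theorem, conjStarAlgAut_kronecker,
    diagonal_ofReal_kronecker, cfc_conjStarAlgAut_diagonal]
  congr 3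
  ext p
  exact hf _ (hP.eigenvalues_mem_spectrum_real p.1) _ (hQ.eigenvalues_mem_spectrum_real p.2)

end

end Matrix

section mpow

open scoped MatrixOrder

variable {n : Type*} [Fintype n] [DecidableEq n]

lemma mpow_eq_cfc (A : Matrix n n ℂ) (r : ℝ) : mpow A r = cfc (· ^ r : ℝ → ℝ) A := by
  by_cases hA : A.IsHermitian
  · rw [mpow, dif_pos hA, hA.cfc_eq, IsHermitian.cfc, conjStarAlgAut_apply]
    rfl
  · rw [mpow, dif_neg hA]
    exact (cfc_apply_of_not_predicate A hA).symm

lemma isHermitian_mpow (A : Matrix n n ℂ) (r : ℝ) : (mpow A r).IsHermitian := by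
  rw [mpow_eq_cfc]
  exact cfc_predicate _ A

lemma Matrix.PosSemidef.mpow {A : Matrix n n ℂ} (hA : A.PosSemidef) (r : ℝ) :
    (mpow A r).PosSemidef := by
  rw [mpow_eq_cfc, ← nonneg_iff_posSemidef]
  exact cfc_nonneg fun x hx => Real.rpow_nonneg (spectrum_nonneg_of_nonneg hA.nonneg hx) r

lemma mpow_one {A : Matrix n n ℂ} (hA : A.IsHermitian) : mpow A 1 = A := by
  rw [mpow_eq_cfc]
  simp only [Real.rpow_one]
  exact cfc_id' ℝ A hA

lemma mpow_mul_mpow {A : Matrix n n ℂ} (hA : A.PosSemidef) {r s : ℝ} (hrs : r + s ≠ 0) :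
    mpow A r * mpow A s = mpow A (r + s) := by
  simp only [mpow_eq_cfc]
  rw [← cfc_mul _ _ A (finite_real_spectrum.continuousOn _) (finite_real_spectrum.continuousOn _)]
  exact cfc_congr fun x hx => (Real.rpow_add' (spectrum_nonneg_of_nonneg hA.nonneg hx) hrs).symm

lemma mpow_half_mul_self {A : Matrix n n ℂ} (hA : A.PosSemidef) :
    mpow A (1 / 2) * mpow A (1 / 2) = A := by
  rw [mpow_mul_mpow hA (by norm_num)]
  norm_num [mpow_one hA.1]

lemma mpow_mpow {A : Matrix n n ℂ} (hA : A.PosSemidef) (r s : ℝ) :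
    mpow (mpow A r) s = mpow A (r * s) := by
  simp only [mpow_eq_cfc]
  refine (cfc_comp (· ^ s) (· ^ r) A hA.1 ((finite_real_spectrum.image _).continuousOn _)
    (finite_real_spectrum.continuousOn _)).symm.trans ?_
  exact cfc_congr fun x hx => (Real.rpow_mul (spectrum_nonneg_of_nonneg hA.nonneg hx) r s).symm

lemma mpow_kronecker {m : Type*} [Fintype m] [DecidableEq m] {P : Matrix n n ℂ}
    {Q : Matrix m m ℂ} (hP : P.PosSemidef) (hQ : Q.PosSemidef) (r : ℝ) :
    mpow (P ⊗ₖ Q) r = mpow P r ⊗ₖ mpow Q r := by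
  simp only [mpow_eq_cfc]
  exact cfc_kronecker hP.1 hQ.1 fun x hx y hy =>
    Real.mul_rpow (spectrum_nonneg_of_nonneg hP.nonneg hx) (spectrum_nonneg_of_nonneg hQ.nonneg hy)

lemma trace_mpow_conjTranspose_mul_self (B : Matrix n n ℂ) (r : ℝ) :
    (mpow (Bᴴ * B) r).trace = (mpow (B * Bᴴ) r).trace := by
  simp only [mpow_eq_cfc, trace_cfc_conjTranspose_mul_self]

lemma re_trace_mpow_nonneg {A : Matrix n n ℂ} (hA : A.PosSemidef) (r : ℝ) :
    0 ≤ (mpow A r).trace.re :=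
  (Complex.nonneg_iff.mp (hA.mpow r).trace_nonneg).1

lemma schattenNorm_of_posSemidef {X : Matrix n n ℂ} (hX : X.PosSemidef) (α : ℝ) :
    schattenNorm α X = (mpow X α).trace.re ^ (1 / α) := by
  have hsq : Xᴴ * X = mpow X 2 := by
    conv_lhs => rw [hX.1.eq, ← mpow_one hX.1]
    rw [mpow_mul_mpow hX (by norm_num)]
    norm_num
  rw [schattenNorm, hsq, mpow_mpow hX]
  ring_nf

end mpow

lemma mpow_kronecker_mul_kronecker_one {n m : Type*} [Fintype n] [DecidableEq n] [Fintype m]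
    [DecidableEq m] {P : Matrix n n ℂ} {Q : Matrix m m ℂ} (hP : P.PosSemidef)
    (hQ : Q.PosSemidef) {r s : ℝ} (hrs : r + s ≠ 0) (X : Matrix (n × m) (n × m) ℂ) :
    mpow (P ⊗ₖ Q) r * ((mpow P s ⊗ₖ 1) * X * (mpow P s ⊗ₖ 1)) * mpow (P ⊗ₖ Q) r =
      (mpow P (r + s) ⊗ₖ mpow Q r) * X * (mpow P (r + s) ⊗ₖ mpow Q r) := by
  have hleft : mpow (P ⊗ₖ Q) r * (mpow P s ⊗ₖ 1) = mpow P (r + s) ⊗ₖ mpow Q r := by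
    rw [mpow_kronecker hP hQ, ← mul_kronecker_mul, mpow_mul_mpow hP hrs, mul_one]
  have hright : (mpow P s ⊗ₖ 1) * mpow (P ⊗ₖ Q) r = mpow P (r + s) ⊗ₖ mpow Q r := by
    rw [mpow_kronecker hP hQ, ← mul_kronecker_mul, mpow_mul_mpow hP (by rwa [add_comm]),
      one_mul, add_comm]
  calc _ = (mpow (P ⊗ₖ Q) r * (mpow P s ⊗ₖ 1)) * X * ((mpow P s ⊗ₖ 1) * mpow (P ⊗ₖ Q) r) := by
        simp only [Matrix.mul_assoc]
    _ = _ := by rw [hleft, hright]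

lemma Real.logb_rpow_eq_mul_logb_of_nonneg {b x : ℝ} (hx : 0 ≤ x) (y : ℝ) :
    Real.logb b (x ^ y) = y * Real.logb b x := by
  rcases hx.eq_or_lt with rfl | hx
  · rcases eq_or_ne y 0 with rfl | hy
    · simp
    · simp [Real.zero_rpow hy]
  · exact Real.logb_rpow_eq_mul_logb_of_pos hx

theorem sRenyi_choi_eq_log_schattenNorm_general {a b : Type*} [Fintype a] [DecidableEq a]
    [Fintype b] [DecidableEq b]
    (N : Matrix a a ℂ →ₗ[ℂ] Matrix b b ℂ) (hN : IsCPTP N)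
    (α : ℝ) (hα : 1 < α)
    (ρA : Matrix a a ℂ) (hρ : IsDensity ρA)
    (σB : Matrix b b ℂ) (hσ : IsDensity σB) :
    sRenyi α
        ((mpow ρA (1 / 2) ⊗ₖ (1 : Matrix b b ℂ)) * choi N *
          (mpow ρA (1 / 2) ⊗ₖ (1 : Matrix b b ℂ)))
        (ρA ⊗ₖ σB) =
      (α / (α - 1)) *
        Real.logb 2
          (schattenNorm α
            (mpow (choi N) (1 / 2) * (mpow ρA (1 / α) ⊗ₖ mpow σB ((1 - α) / α)) *
              mpow (choi N) (1 / 2))) := by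
  have hα0 : α ≠ 0 := by positivity
  set c := (1 - α) / (2 * α) with hc
  have hρc : c + 1 / 2 = 1 / (2 * α) := by rw [hc]; field_simp; ring
  have hρcc : c + 1 / 2 + (c + 1 / 2) = 1 / α := by rw [hc]; field_simp; ring
  have hσcc : c + c = (1 - α) / α := by rw [hc]; field_simp; ring
  set G := mpow (choi N) (1 / 2)
  set K := mpow ρA (c + 1 / 2) ⊗ₖ mpow σB c
  have hG : G.IsHermitian := isHermitian_mpow _ _
  have hK : K.IsHermitian := (isHermitian_mpow _ _).kronecker (isHermitian_mpow _ _)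
  have hGG : G * G = choi N := mpow_half_mul_self hN.1
  have hKK : K * K = mpow ρA (1 / α) ⊗ₖ mpow σB ((1 - α) / α) := by
    rw [← mul_kronecker_mul, mpow_mul_mpow hρ.1 (by rw [hρcc]; positivity), hρcc,
      mpow_mul_mpow hσ.1 (by rw [hσcc]; exact div_ne_zero (by linarith) hα0), hσcc]
  have hsandwich : mpow (ρA ⊗ₖ σB) c * ((mpow ρA (1 / 2) ⊗ₖ 1) * choi N *
      (mpow ρA (1 / 2) ⊗ₖ 1)) * mpow (ρA ⊗ₖ σB) c = (G * K)ᴴ * (G * K) := by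
    rw [mpow_kronecker_mul_kronecker_one hρ.1 hσ.1 (by rw [hρc]; positivity), ← hGG,
      conjTranspose_mul, hG.eq, hK.eq]
    simp only [K, Matrix.mul_assoc]
  have hschatten : G * (mpow ρA (1 / α) ⊗ₖ mpow σB ((1 - α) / α)) * G = G * K * (G * K)ᴴ := by
    rw [← hKK, conjTranspose_mul, hG.eq, hK.eq]
    simp only [Matrix.mul_assoc]
  have hBB := posSemidef_self_mul_conjTranspose (G * K)
  rw [sRenyi, hsandwich, trace_mpow_conjTranspose_mul_self, hschatten,
    schattenNorm_of_posSemidef hBB,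
    Real.logb_rpow_eq_mul_logb_of_nonneg (re_trace_mpow_nonneg hBB _)]
  field_simp

/-- For a quantum channel `N` with Choi matrix `Γ^N`, density operators
`ρ_A, σ_B` (with appropriate supports, here taken positive definite) and `α ∈ (1,∞)`,
`D̃_α(ρ_A^{1/2} Γ^N ρ_A^{1/2} ‖ ρ_A ⊗ σ_B)
  = (α/(α-1)) log₂ ‖(Γ^N)^{1/2} (ρ_A^{1/α} ⊗ σ_B^{(1-α)/α}) (Γ^N)^{1/2}‖_α`. -/
theorem sRenyi_choi_eq_log_schattenNorm {a b : Type*} [Fintype a] [DecidableEq a]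
    [Fintype b] [DecidableEq b]
    (N : Matrix a a ℂ →ₗ[ℂ] Matrix b b ℂ) (hN : IsCPTP N)
    (α : ℝ) (hα : 1 < α)
    (ρA : Matrix a a ℂ) (hρ : IsDensity ρA) (hρpd : ρA.PosDef)
    (σB : Matrix b b ℂ) (hσ : IsDensity σB) (hσpd : σB.PosDef) :
    sRenyi α
        ((mpow ρA (1 / 2) ⊗ₖ (1 : Matrix b b ℂ)) * choi N *
          (mpow ρA (1 / 2) ⊗ₖ (1 : Matrix b b ℂ)))
        (ρA ⊗ₖ σB) =
      (α / (α - 1)) *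
        Real.logb 2
          (schattenNorm α
            (mpow (choi N) (1 / 2) * (mpow ρA (1 / α) ⊗ₖ mpow σB ((1 - α) / α)) *
              mpow (choi N) (1 / 2))) :=
  sRenyi_choi_eq_log_schattenNorm_general N hN α hα ρA hρ σB hσ
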